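/- arXiv:2508.01748 — 8 statements merged into one kernel-verified Lean document; each statement's English description precedes it below -/
import Mathlib

section
/- Let F be a field, let m, n, p, t be positive natural numbers, and let U ∈ F^{t×(m·n)}, V ∈ F^{t×(n·p)}, W ∈ F^{t×(p·m)}. Then ⟨U,V,W⟩ computes the matrix product bilinearly, i.e. for all A ∈ F^{m×n} and B ∈ F^{n×p}, vec((A·B)ᵀ) = Wᵀ·((U·vec(A)) ⊙ (V·vec(B))) where ⊙ is the entrywise (Hadamard) product, if and only if the trilinear trace identity holds: for all A ∈ F^{m×n}, B ∈ F^{n×p}, C ∈ F^{p×m}, trace(A·B·C) = Σ_{r=0}^{t-1} (U·vec(A))_r · (V·vec(B))_r · (W·vec(C))_r. -/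
open Matrix

/-- Row-major vectorization: `vec A (n*i+j) = A i j`. -/
def vec {F : Type*} {m n : ℕ} (A : Matrix (Fin m) (Fin n) F) : Fin (m * n) → F :=
  fun r => A r.divNat r.modNat

/-- `⟨U, V, W⟩` is an `⟨m, n, p; t⟩`-algorithm over `F`: for all `A, B, C` of the appropriate
sizes, `trace (A * B * C) = ∑ r, (U ⬝ᵥ vec A) r * (V ⬝ᵥ vec B) r * (W ⬝ᵥ vec C) r`. -/
def IsMMAlg {F : Type*} [Field F] (m n p t : ℕ)
    (U : Matrix (Fin t) (Fin (m * n)) F)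
    (V : Matrix (Fin t) (Fin (n * p)) F)
    (W : Matrix (Fin t) (Fin (p * m)) F) : Prop :=
  ∀ (A : Matrix (Fin m) (Fin n) F) (B : Matrix (Fin n) (Fin p) F) (C : Matrix (Fin p) (Fin m) F),
    (A * B * C).trace =
      ∑ r : Fin t, U.mulVec (vec A) r * V.mulVec (vec B) r * W.mulVec (vec C) r

lemma vec_apply_equiv {F : Type*} {p m : ℕ} (C : Matrix (Fin p) (Fin m) F)
    (k : Fin p) (i : Fin m) : vec C (finProdFinEquiv (k, i)) = C k i := by
  have h := finProdFinEquiv.symm_apply_apply (k, i)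
  rw [finProdFinEquiv_symm_apply] at h
  unfold _root_.vec
  rw [(Prod.mk.injEq _ _ _ _).mp h |>.1, (Prod.mk.injEq _ _ _ _).mp h |>.2]

lemma sum_vec_mul {F : Type*} [Field F] {p m : ℕ} (v : Fin (p * m) → F)
    (C : Matrix (Fin p) (Fin m) F) :
    ∑ s : Fin (p * m), v s * vec C s =
      ∑ k : Fin p, ∑ i : Fin m, v (finProdFinEquiv (k, i)) * C k i := by
  rw [← finProdFinEquiv.sum_comp (fun s => v s * vec C s), Fintype.sum_prod_type]
  simp [vec_apply_equiv]

lemma trace_eq_sum_vec {F : Type*} [Field F] {m n p : ℕ}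
    (A : Matrix (Fin m) (Fin n) F) (B : Matrix (Fin n) (Fin p) F)
    (C : Matrix (Fin p) (Fin m) F) :
    (A * B * C).trace = ∑ s : Fin (p * m), vec ((A * B)ᵀ) s * vec C s := by
  rw [sum_vec_mul]
  simp only [vec_apply_equiv, transpose_apply]
  rw [Matrix.trace, Finset.sum_comm]
  simp [Matrix.diag, Matrix.mul_apply]

lemma swap_sum {F : Type*} [Field F] {p m t : ℕ} (W : Matrix (Fin t) (Fin (p * m)) F)
    (h : Fin t → F) (C : Matrix (Fin p) (Fin m) F) :
    ∑ r : Fin t, h r * W.mulVec (vec C) r =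
      ∑ s : Fin (p * m), Wᵀ.mulVec h s * vec C s := by
  simp only [Matrix.mulVec, dotProduct, transpose_apply, Finset.mul_sum, Finset.sum_mul]
  rw [Finset.sum_comm]
  congr 1; funext s; congr 1; funext r; ring

lemma vec_stdBasis {F : Type*} [Field F] {p m : ℕ} (s s' : Fin (p * m)) :
    vec (Matrix.single s.divNat s.modNat (1 : F)) s' = if s' = s then 1 else 0 := by
  by_cases h : s' = s
  · subst h; simp [_root_.vec, Matrix.single]
  · have hne : ¬(s.divNat = s'.divNat ∧ s.modNat = s'.modNat) := by
      rintro ⟨h1, h2⟩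
      exact h (finProdFinEquiv.symm.injective (by
        rw [finProdFinEquiv_symm_apply, finProdFinEquiv_symm_apply]
        exact Prod.ext h1.symm h2.symm))
    simp [_root_.vec, Matrix.single, hne, h]

/-- The bilinear identity `vec ((A*B)ᵀ) = Wᵀ ⬝ᵥ ((U ⬝ᵥ vec A) ⊙ (V ⬝ᵥ vec B))` holds for all
`A, B` iff the trilinear trace identity holds for all `A, B, C`. -/
theorem bilinear_iff_trilinear {F : Type*} [Field F] (m n p t : ℕ)
    (hm : 0 < m) (hn : 0 < n) (hp : 0 < p) (ht : 0 < t)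
    (U : Matrix (Fin t) (Fin (m * n)) F)
    (V : Matrix (Fin t) (Fin (n * p)) F)
    (W : Matrix (Fin t) (Fin (p * m)) F) :
    (∀ (A : Matrix (Fin m) (Fin n) F) (B : Matrix (Fin n) (Fin p) F),
        _root_.vec ((A * B)ᵀ) =
          Wᵀ.mulVec (fun r => U.mulVec (vec A) r * V.mulVec (vec B) r)) ↔
      IsMMAlg m n p t U V W := by
  constructor
  · intro hbil A B C
    rw [trace_eq_sum_vec, hbil A B, ← swap_sum]
  · intro halg A B
    funext s
    have h := halg A B (Matrix.single s.divNat s.modNat 1)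
    rw [trace_eq_sum_vec] at h
    rw [swap_sum W (fun r => U.mulVec (vec A) r * V.mulVec (vec B) r)
      (Matrix.single s.divNat s.modNat 1)] at h
    simp only [vec_stdBasis, mul_ite, mul_one, mul_zero,
      Finset.sum_ite_eq', Finset.mem_univ, if_true] at h
    convert h using 2
end

section
/- Let F be a field. If there exists an ⟨m,n,p;t⟩-algorithm over F and an ⟨m',n',p';t'⟩-algorithm over F, then there exists an ⟨m·m', n·n', p·p'; t·t'⟩-algorithm over F. -/
open Matrix

lemma trace_triple {F : Type*} [CommRing F] {m n p : ℕ}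
    (A : Matrix (Fin m) (Fin n) F) (B : Matrix (Fin n) (Fin p) F) (C : Matrix (Fin p) (Fin m) F) :
    (A * B * C).trace = ∑ i : Fin m, ∑ j : Fin n, ∑ l : Fin p, A i j * B j l * C l i := by
  simp only [trace, diag_apply, mul_apply, Finset.sum_mul, Finset.mul_sum]
  exact Finset.sum_congr rfl fun i _ => Finset.sum_comm

lemma mulVec_vec {F : Type*} [CommRing F] {m n t : ℕ}
    (U : Matrix (Fin t) (Fin (m * n)) F) (A : Matrix (Fin m) (Fin n) F) (r : Fin t) :
    U.mulVec (vec A) r = ∑ x : Fin m × Fin n, U r (finProdFinEquiv x) * A x.1 x.2 := by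
  rw [mulVec, dotProduct, ← Equiv.sum_comp (finProdFinEquiv : Fin m × Fin n ≃ Fin (m*n))
    (fun c => U r c * vec A c)]
  refine Finset.sum_congr rfl fun x _ => ?_
  congr 1
  show A _ _ = A x.1 x.2
  have h : (finProdFinEquiv.symm (finProdFinEquiv x) : Fin m × Fin n) = x :=
    Equiv.symm_apply_apply _ _
  exact congrArg₂ A (congrArg Prod.fst h) (congrArg Prod.snd h)

lemma sum_mul3 {F : Type*} [CommRing F] {ι κ₁ κ₂ κ₃ : Type*}
    [Fintype ι] [Fintype κ₁] [Fintype κ₂] [Fintype κ₃]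
    (f : ι → κ₁ → F) (g : ι → κ₂ → F) (h : ι → κ₃ → F) :
    ∑ r : ι, (∑ x : κ₁, f r x) * (∑ y : κ₂, g r y) * (∑ z : κ₃, h r z)
      = ∑ x : κ₁, ∑ y : κ₂, ∑ z : κ₃, ∑ r : ι, f r x * g r y * h r z := by
  have e1 : ∀ r : ι, (∑ x : κ₁, f r x) * (∑ y : κ₂, g r y) * (∑ z : κ₃, h r z)
      = ∑ x : κ₁, ∑ y : κ₂, ∑ z : κ₃, f r x * g r y * h r z := by
    intro r
    rw [Finset.sum_mul_sum, Finset.sum_mul]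
    refine Finset.sum_congr rfl fun x _ => ?_
    rw [Finset.sum_mul]
    refine Finset.sum_congr rfl fun y _ => ?_
    rw [Finset.mul_sum]
  simp only [e1]
  calc ∑ r : ι, ∑ x : κ₁, ∑ y : κ₂, ∑ z : κ₃, f r x * g r y * h r z
      = ∑ x : κ₁, ∑ r : ι, ∑ y : κ₂, ∑ z : κ₃, f r x * g r y * h r z := Finset.sum_comm
    _ = ∑ x : κ₁, ∑ y : κ₂, ∑ r : ι, ∑ z : κ₃, f r x * g r y * h r z :=
        Finset.sum_congr rfl fun x _ => Finset.sum_comm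
    _ = ∑ x : κ₁, ∑ y : κ₂, ∑ z : κ₃, ∑ r : ι, f r x * g r y * h r z :=
        Finset.sum_congr rfl fun x _ => Finset.sum_congr rfl fun y _ => Finset.sum_comm

def TensorEq {F : Type*} [Field F] (m n p t : ℕ)
    (U : Matrix (Fin t) (Fin (m * n)) F)
    (V : Matrix (Fin t) (Fin (n * p)) F)
    (W : Matrix (Fin t) (Fin (p * m)) F) : Prop :=
  ∀ (i : Fin m) (j k : Fin n) (l s : Fin p) (q : Fin m),
    ∑ r : Fin t, U r (finProdFinEquiv (i, j)) * V r (finProdFinEquiv (k, l))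
        * W r (finProdFinEquiv (s, q))
      = (if j = k then (1:F) else 0) * (if l = s then 1 else 0) * (if q = i then 1 else 0)

lemma isMMAlg_of_tensorEq {F : Type*} [Field F] {m n p t : ℕ}
    {U : Matrix (Fin t) (Fin (m * n)) F}
    {V : Matrix (Fin t) (Fin (n * p)) F}
    {W : Matrix (Fin t) (Fin (p * m)) F}
    (h : TensorEq m n p t U V W) : IsMMAlg m n p t U V W := by
  intro A B C
  rw [trace_triple]
  simp only [mulVec_vec]
  rw [sum_mul3]
  have key : ∀ (x : Fin m × Fin n) (y : Fin n × Fin p) (z : Fin p × Fin m),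
      ∑ r : Fin t, (U r (finProdFinEquiv x) * A x.1 x.2) * (V r (finProdFinEquiv y) * B y.1 y.2)
          * (W r (finProdFinEquiv z) * C z.1 z.2)
        = ((if x.2 = y.1 then (1:F) else 0) * (if y.2 = z.1 then 1 else 0)
            * (if z.2 = x.1 then 1 else 0)) * (A x.1 x.2 * B y.1 y.2 * C z.1 z.2) := by
    intro x y z
    rw [← h x.1 x.2 y.1 y.2 z.1 z.2, Finset.sum_mul]
    exact Finset.sum_congr rfl fun r _ => by ring
  simp only [key]
  simp only [Fintype.sum_prod_type]
  simp [ite_mul, mul_ite, Finset.sum_ite_eq, Finset.sum_ite_eq']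

lemma sum_std {F : Type*} [Field F] {m n t : ℕ}
    (U : Matrix (Fin t) (Fin (m * n)) F) (r : Fin t) (i : Fin m) (j : Fin n) :
    ∑ x : Fin m × Fin n, U r (finProdFinEquiv x) * Matrix.single i j (1:F) x.1 x.2
      = U r (finProdFinEquiv (i, j)) := by
  rw [Fintype.sum_prod_type]
  simp [Matrix.single, ite_and, Finset.sum_ite_eq]

lemma tensorEq_of_isMMAlg {F : Type*} [Field F] {m n p t : ℕ}
    {U : Matrix (Fin t) (Fin (m * n)) F}
    {V : Matrix (Fin t) (Fin (n * p)) F}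
    {W : Matrix (Fin t) (Fin (p * m)) F}
    (h : IsMMAlg m n p t U V W) : TensorEq m n p t U V W := by
  intro i j k l s q
  have H := h (Matrix.single i j 1) (Matrix.single k l 1) (Matrix.single s q 1)
  rw [trace_triple] at H
  simp only [mulVec_vec, sum_std] at H
  rw [← H]
  simp [Matrix.single, ite_and, Finset.sum_ite_eq, mul_ite, ite_mul]
  by_cases h1 : j = k <;> by_cases h2 : l = s <;> by_cases h3 : q = i <;>
    simp [h1, h2, h3, eq_comm (a := i) (b := q)]

lemma ite_split {F : Type*} [Field F] {a b : ℕ} (X Y : Fin (a * b)) :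
    (if (finProdFinEquiv.symm X).1 = (finProdFinEquiv.symm Y).1 then (1:F) else 0) *
      (if (finProdFinEquiv.symm X).2 = (finProdFinEquiv.symm Y).2 then (1:F) else 0)
      = if X = Y then 1 else 0 := by
  by_cases h : X = Y
  · simp [h]
  · have hne : ¬((finProdFinEquiv.symm X).1 = (finProdFinEquiv.symm Y).1 ∧
        (finProdFinEquiv.symm X).2 = (finProdFinEquiv.symm Y).2) := by
      rintro ⟨h1, h2⟩
      exact h (finProdFinEquiv.symm.injective (Prod.ext h1 h2))
    rcases not_and_or.mp hne with h' | h' <;>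
      simp only [finProdFinEquiv_symm_apply] at h' <;> simp [h', h]

theorem isMMAlg_comp' {F : Type*} [Field F] (m n p t m' n' p' t' : ℕ)
    (U : Matrix (Fin t) (Fin (m * n)) F) (V : Matrix (Fin t) (Fin (n * p)) F)
    (W : Matrix (Fin t) (Fin (p * m)) F) (hA : IsMMAlg m n p t U V W)
    (U' : Matrix (Fin t') (Fin (m' * n')) F) (V' : Matrix (Fin t') (Fin (n' * p')) F)
    (W' : Matrix (Fin t') (Fin (p' * m')) F) (hA' : IsMMAlg m' n' p' t' U' V' W') :
    ∃ (U₂ : Matrix (Fin (t * t')) (Fin ((m * m') * (n * n'))) F)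
      (V₂ : Matrix (Fin (t * t')) (Fin ((n * n') * (p * p'))) F)
      (W₂ : Matrix (Fin (t * t')) (Fin ((p * p') * (m * m'))) F),
      IsMMAlg (m * m') (n * n') (p * p') (t * t') U₂ V₂ W₂ := by
  have hT := tensorEq_of_isMMAlg hA
  have hT' := tensorEq_of_isMMAlg hA'
  refine ⟨
    fun R c => U (finProdFinEquiv.symm R).1
        (finProdFinEquiv ((finProdFinEquiv.symm (finProdFinEquiv.symm c).1).1,
          (finProdFinEquiv.symm (finProdFinEquiv.symm c).2).1)) *
      U' (finProdFinEquiv.symm R).2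
        (finProdFinEquiv ((finProdFinEquiv.symm (finProdFinEquiv.symm c).1).2,
          (finProdFinEquiv.symm (finProdFinEquiv.symm c).2).2)),
    fun R c => V (finProdFinEquiv.symm R).1
        (finProdFinEquiv ((finProdFinEquiv.symm (finProdFinEquiv.symm c).1).1,
          (finProdFinEquiv.symm (finProdFinEquiv.symm c).2).1)) *
      V' (finProdFinEquiv.symm R).2
        (finProdFinEquiv ((finProdFinEquiv.symm (finProdFinEquiv.symm c).1).2,
          (finProdFinEquiv.symm (finProdFinEquiv.symm c).2).2)),
    fun R c => W (finProdFinEquiv.symm R).1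
        (finProdFinEquiv ((finProdFinEquiv.symm (finProdFinEquiv.symm c).1).1,
          (finProdFinEquiv.symm (finProdFinEquiv.symm c).2).1)) *
      W' (finProdFinEquiv.symm R).2
        (finProdFinEquiv ((finProdFinEquiv.symm (finProdFinEquiv.symm c).1).2,
          (finProdFinEquiv.symm (finProdFinEquiv.symm c).2).2)),
    ?_⟩
  apply isMMAlg_of_tensorEq
  intro I J K L S Q
  rw [← Equiv.sum_comp (finProdFinEquiv : Fin t × Fin t' ≃ Fin (t * t'))]
  simp only [Equiv.symm_apply_apply]
  calc ∑ x : Fin t × Fin t',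
        (U x.1 (finProdFinEquiv ((finProdFinEquiv.symm I).1, (finProdFinEquiv.symm J).1)) *
          U' x.2 (finProdFinEquiv ((finProdFinEquiv.symm I).2, (finProdFinEquiv.symm J).2))) *
        (V x.1 (finProdFinEquiv ((finProdFinEquiv.symm K).1, (finProdFinEquiv.symm L).1)) *
          V' x.2 (finProdFinEquiv ((finProdFinEquiv.symm K).2, (finProdFinEquiv.symm L).2))) *
        (W x.1 (finProdFinEquiv ((finProdFinEquiv.symm S).1, (finProdFinEquiv.symm Q).1)) *
          W' x.2 (finProdFinEquiv ((finProdFinEquiv.symm S).2, (finProdFinEquiv.symm Q).2)))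
      = (∑ r : Fin t,
          U r (finProdFinEquiv ((finProdFinEquiv.symm I).1, (finProdFinEquiv.symm J).1)) *
          V r (finProdFinEquiv ((finProdFinEquiv.symm K).1, (finProdFinEquiv.symm L).1)) *
          W r (finProdFinEquiv ((finProdFinEquiv.symm S).1, (finProdFinEquiv.symm Q).1))) *
        (∑ r' : Fin t',
          U' r' (finProdFinEquiv ((finProdFinEquiv.symm I).2, (finProdFinEquiv.symm J).2)) *
          V' r' (finProdFinEquiv ((finProdFinEquiv.symm K).2, (finProdFinEquiv.symm L).2)) *
          W' r' (finProdFinEquiv ((finProdFinEquiv.symm S).2, (finProdFinEquiv.symm Q).2))) := by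
        rw [Finset.sum_mul_sum, Fintype.sum_prod_type]
        exact Finset.sum_congr rfl fun r _ => Finset.sum_congr rfl fun r' _ => by ring
    _ = (if J = K then (1:F) else 0) * (if L = S then 1 else 0) * (if Q = I then 1 else 0) := by
        rw [hT _ _ _ _ _ _, hT' _ _ _ _ _ _, ← ite_split J K, ← ite_split L S, ← ite_split Q I]
        ring

/-- Composition of matrix multiplication algorithms. -/
theorem isMMAlg_comp {F : Type*} [Field F] (m n p t m' n' p' t' : ℕ)
    (h : ∃ (U : Matrix (Fin t) (Fin (m * n)) F) (V : Matrix (Fin t) (Fin (n * p)) F)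
      (W : Matrix (Fin t) (Fin (p * m)) F), IsMMAlg m n p t U V W)
    (h' : ∃ (U : Matrix (Fin t') (Fin (m' * n')) F) (V : Matrix (Fin t') (Fin (n' * p')) F)
      (W : Matrix (Fin t') (Fin (p' * m')) F), IsMMAlg m' n' p' t' U V W) :
    ∃ (U : Matrix (Fin (t * t')) (Fin ((m * m') * (n * n'))) F)
      (V : Matrix (Fin (t * t')) (Fin ((n * n') * (p * p'))) F)
      (W : Matrix (Fin (t * t')) (Fin ((p * p') * (m * m'))) F),
      IsMMAlg (m * m') (n * n') (p * p') (t * t') U V W := by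
  obtain ⟨U, V, W, hA⟩ := h
  obtain ⟨U', V', W', hA'⟩ := h'
  exact isMMAlg_comp' m n p t m' n' p' t' U V W hA U' V' W' hA'
end

section
/- Let F be a field and let ⟨U,V,W⟩ be an ⟨m,n,p;t⟩-algorithm over F with t ≥ 2. If ⟨U,V,W⟩ has a pair of kin rows, i.e. there exist indices i ≠ j in [t] such that at least two of the equalities [U]_i = [U]_j, [V]_i = [V]_j, [W]_i = [W]_j hold, then there exists an ⟨m,n,p;t−1⟩-algorithm over F. -/
open Matrix

/-- Rows `i` and `j` of the triple `⟨U,V,W⟩` are kin: at least two of the three row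
equalities hold. -/
def KinRows {F : Type*} {t c₁ c₂ c₃ : ℕ}
    (U : Matrix (Fin t) (Fin c₁) F) (V : Matrix (Fin t) (Fin c₂) F)
    (W : Matrix (Fin t) (Fin c₃) F) (i j : Fin t) : Prop :=
  (U i = U j ∧ V i = V j) ∨ (U i = U j ∧ W i = W j) ∨ (V i = V j ∧ W i = W j)

lemma sum_merge {F : Type*} [Field F] {s : ℕ} (i j : Fin (s+1)) (hij : i ≠ j)
    (a b c : Fin (s+1) → F) (ha : a j = a i) (hb : b j = b i) :
    ∑ r, a r * b r * c r = ∑ k : Fin s, a (j.succAbove k) * b (j.succAbove k) *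
      (if j.succAbove k = i then c i + c j else c (j.succAbove k)) := by
  obtain ⟨k0, hk0⟩ := Fin.exists_succAbove_eq hij
  rw [Fin.sum_univ_succAbove _ j]
  have : ∀ k : Fin s, a (j.succAbove k) * b (j.succAbove k) *
      (if j.succAbove k = i then c i + c j else c (j.succAbove k)) =
      a (j.succAbove k) * b (j.succAbove k) * c (j.succAbove k) +
      (if k = k0 then a j * b j * c j else 0) := by
    intro k
    by_cases h : k = k0
    · subst h; rw [hk0]; simp [ha, hb]; ring
    · have : j.succAbove k ≠ i := by
        rw [← hk0]; exact fun he => h (j.succAbove_right_injective he)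
      simp [this, h]
  rw [Finset.sum_congr rfl (fun k _ => this k), Finset.sum_add_distrib,
    Finset.sum_ite_eq' Finset.univ k0 (fun _ => a j * b j * c j)]
  simp [add_comm]

lemma merged_mulVec {F : Type*} [Field F] {s c : ℕ} (i j : Fin (s+1))
    (M : Matrix (Fin (s+1)) (Fin c) F) (x : Fin c → F) (k : Fin s) :
    (Matrix.of fun k l => if j.succAbove k = i then M i l + M j l
      else M (j.succAbove k) l).mulVec x k =
    if j.succAbove k = i then M.mulVec x i + M.mulVec x j
      else M.mulVec x (j.succAbove k) := by
  by_cases h : j.succAbove k = i <;>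
    simp [h, mulVec, dotProduct, add_mul, Finset.sum_add_distrib]

/-- If an `⟨m,n,p;t⟩`-algorithm (with `t ≥ 2`) has a pair of kin rows, then there is an
`⟨m,n,p;t-1⟩`-algorithm. -/
theorem isMMAlg_of_kin_pair {F : Type*} [Field F] (m n p t : ℕ) (ht : 2 ≤ t)
    (U : Matrix (Fin t) (Fin (m * n)) F)
    (V : Matrix (Fin t) (Fin (n * p)) F)
    (W : Matrix (Fin t) (Fin (p * m)) F)
    (halg : IsMMAlg m n p t U V W)
    (hkin : ∃ i j : Fin t, i ≠ j ∧ KinRows U V W i j) :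
    ∃ (U' : Matrix (Fin (t - 1)) (Fin (m * n)) F)
      (V' : Matrix (Fin (t - 1)) (Fin (n * p)) F)
      (W' : Matrix (Fin (t - 1)) (Fin (p * m)) F),
      IsMMAlg m n p (t - 1) U' V' W' := by
  obtain ⟨s, rfl⟩ : ∃ s, t = s + 1 := ⟨t - 1, by omega⟩
  obtain ⟨i, j, hij, hkin⟩ := hkin
  rcases hkin with ⟨hU, hV⟩ | ⟨hU, hW⟩ | ⟨hV, hW⟩
  · refine ⟨U.submatrix j.succAbove id, V.submatrix j.succAbove id,
      Matrix.of fun k l => if j.succAbove k = i then W i l + W j l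
        else W (j.succAbove k) l, fun A B C => ?_⟩
    rw [halg A B C, sum_merge i j hij _ _ _ (congrArg (· ⬝ᵥ _root_.vec A) hU.symm)
      (congrArg (· ⬝ᵥ _root_.vec B) hV.symm)]
    refine Finset.sum_congr rfl fun k _ => ?_
    rw [merged_mulVec]
    by_cases h : j.succAbove k = i <;> simp [h, mulVec, submatrix]
  · refine ⟨U.submatrix j.succAbove id,
      Matrix.of fun k l => if j.succAbove k = i then V i l + V j l
        else V (j.succAbove k) l, W.submatrix j.succAbove id, fun A B C => ?_⟩
    rw [halg A B C]
    have : ∀ r, U.mulVec (vec A) r * V.mulVec (vec B) r * W.mulVec (vec C) r =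
        U.mulVec (vec A) r * W.mulVec (vec C) r * V.mulVec (vec B) r :=
      fun r => by ring
    rw [Finset.sum_congr rfl fun r _ => this r,
      sum_merge i j hij _ _ _ (congrArg (· ⬝ᵥ _root_.vec A) hU.symm)
      (congrArg (· ⬝ᵥ _root_.vec C) hW.symm)]
    refine Finset.sum_congr rfl fun k _ => ?_
    rw [merged_mulVec]
    by_cases h : j.succAbove k = i <;> simp [h, mulVec, submatrix] <;> ring
  · refine ⟨Matrix.of fun k l => if j.succAbove k = i then U i l + U j l
        else U (j.succAbove k) l, V.submatrix j.succAbove id,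
      W.submatrix j.succAbove id, fun A B C => ?_⟩
    rw [halg A B C]
    have : ∀ r, U.mulVec (vec A) r * V.mulVec (vec B) r * W.mulVec (vec C) r =
        V.mulVec (vec B) r * W.mulVec (vec C) r * U.mulVec (vec A) r :=
      fun r => by ring
    rw [Finset.sum_congr rfl fun r _ => this r,
      sum_merge i j hij _ _ _ (congrArg (· ⬝ᵥ _root_.vec B) hV.symm)
      (congrArg (· ⬝ᵥ _root_.vec C) hW.symm)]
    refine Finset.sum_congr rfl fun k _ => ?_
    rw [merged_mulVec]
    by_cases h : j.succAbove k = i <;> simp [h, mulVec, submatrix] <;> ring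
end

section
/- Let F be a field and let ⟨U,V,W⟩ be an ⟨m,n,p;t⟩-algorithm over F that has s pairwise disjoint pairs of kin rows, i.e. there exist pairs (i₁,j₁),…,(i_s,j_s) of indices in [t] with all 2s indices distinct, such that for each k the rows i_k and j_k of ⟨U,V,W⟩ are kin. Then there exists an ⟨m,n,p;t−s⟩-algorithm over F. -/
open Matrix

/-- If an `⟨m,n,p;t⟩`-algorithm has `s` pairwise disjoint pairs of kin rows (all `2s` row
indices distinct), then there is an `⟨m,n,p;t-s⟩`-algorithm. -/
theorem isMMAlg_of_disjoint_kin_pairs {F : Type*} [Field F] (m n p t s : ℕ)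
    (U : Matrix (Fin t) (Fin (m * n)) F)
    (V : Matrix (Fin t) (Fin (n * p)) F)
    (W : Matrix (Fin t) (Fin (p * m)) F)
    (halg : IsMMAlg m n p t U V W)
    (hkin : ∃ a b : Fin s → Fin t,
      Function.Injective (Sum.elim a b : Fin s ⊕ Fin s → Fin t) ∧
      ∀ k : Fin s, KinRows U V W (a k) (b k)) :
    ∃ (U' : Matrix (Fin (t - s)) (Fin (m * n)) F)
      (V' : Matrix (Fin (t - s)) (Fin (n * p)) F)
      (W' : Matrix (Fin (t - s)) (Fin (p * m)) F),
      IsMMAlg m n p (t - s) U' V' W' := by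
  
  classical
  obtain ⟨a, b, hinj, hkin⟩ := hkin
  have ha : Function.Injective a := fun k l h => by
    have : (Sum.inl k : Fin s ⊕ Fin s) = Sum.inl l := hinj h
    simpa using this
  have hb : Function.Injective b := fun k l h => by
    have : (Sum.inr k : Fin s ⊕ Fin s) = Sum.inr l := hinj h
    simpa using this
  have hab : ∀ k l, a k ≠ b l := fun k l h => by
    have : (Sum.inl k : Fin s ⊕ Fin s) = Sum.inr l := hinj h
    simp at this
  set T : Finset (Fin t) := Finset.univ \ Finset.image b Finset.univ with hTdef
  have hTcard : T.card = t - s := by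
    rw [hTdef, Finset.card_sdiff_of_subset (Finset.subset_univ _),
      Finset.card_image_of_injective _ hb, Finset.card_univ, Finset.card_univ,
      Fintype.card_fin, Fintype.card_fin]
  set U2 : Fin t → Fin (m * n) → F := fun r =>
    if h : ∃ k, a k = r then
      (if U (a h.choose) = U (b h.choose) then U r else U r + U (b h.choose))
    else U r with hU2def
  set V2 : Fin t → Fin (n * p) → F := fun r =>
    if h : ∃ k, a k = r then
      (if U (a h.choose) = U (b h.choose) ∧ ¬ V (a h.choose) = V (b h.choose)
        then V r + V (b h.choose) else V r)
    else V r with hV2def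
  set W2 : Fin t → Fin (p * m) → F := fun r =>
    if h : ∃ k, a k = r then
      (if U (a h.choose) = U (b h.choose) ∧ V (a h.choose) = V (b h.choose)
        then W r + W (b h.choose) else W r)
    else W r with hW2def
  let e : Fin (t - s) ≃ T := (T.equivFin.trans (finCongr hTcard)).symm
  refine ⟨Matrix.of fun r => U2 (e r), Matrix.of fun r => V2 (e r),
    Matrix.of fun r => W2 (e r), ?_⟩
  intro A B C
  set x := _root_.vec A
  set y := _root_.vec B
  set z := _root_.vec C
  set G : Fin t → F := fun r => U r ⬝ᵥ x * (V r ⬝ᵥ y) * (W r ⬝ᵥ z) with hGdef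
  set G2 : Fin t → F := fun r => U2 r ⬝ᵥ x * (V2 r ⬝ᵥ y) * (W2 r ⬝ᵥ z) with hG2def
  have hno : ∀ r : Fin t, (¬ ∃ k, a k = r) → G2 r = G r := by
    intro r h
    simp only [hG2def, hU2def, hV2def, hW2def, dif_neg h, hGdef]
  have hyes : ∀ k, G2 (a k) = G (a k) + G (b k) := by
    intro k
    have h : ∃ k', a k' = a k := ⟨k, rfl⟩
    have hk : h.choose = k := ha h.choose_spec
    simp only [hG2def, hU2def, hV2def, hW2def, dif_pos h, hk, hGdef]
    by_cases hU : U (a k) = U (b k)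
    · by_cases hV : V (a k) = V (b k)
      · rw [if_pos hU, if_neg (by simp [hV]), if_pos ⟨hU, hV⟩, add_dotProduct]
        have h1 : U (a k) ⬝ᵥ x = U (b k) ⬝ᵥ x := by rw [hU]
        have h2 : V (a k) ⬝ᵥ y = V (b k) ⬝ᵥ y := by rw [hV]
        rw [h1, h2]; ring
      · have hW : W (a k) = W (b k) := by
          rcases hkin k with ⟨_, h2⟩ | ⟨_, h2⟩ | ⟨h2, _⟩
          · exact absurd h2 hV
          · exact h2
          · exact absurd h2 hV
        rw [if_pos hU, if_pos ⟨hU, hV⟩, if_neg (by simp [hV]), add_dotProduct]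
        have h1 : U (a k) ⬝ᵥ x = U (b k) ⬝ᵥ x := by rw [hU]
        have h2 : W (a k) ⬝ᵥ z = W (b k) ⬝ᵥ z := by rw [hW]
        rw [h1, h2]; ring
    · have hVW : V (a k) = V (b k) ∧ W (a k) = W (b k) := by
        rcases hkin k with ⟨h1, _⟩ | ⟨h1, _⟩ | h1
        · exact absurd h1 hU
        · exact absurd h1 hU
        · exact h1
      rw [if_neg hU, if_neg (by simp [hU]), if_neg (by simp [hU]), add_dotProduct]
      have h1 : V (a k) ⬝ᵥ y = V (b k) ⬝ᵥ y := by rw [hVW.1]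
      have h2 : W (a k) ⬝ᵥ z = W (b k) ⬝ᵥ z := by rw [hVW.2]
      rw [h1, h2]; ring
  have hRHS : (∑ r : Fin (t - s),
      (Matrix.of fun r => U2 (e r)).mulVec x r * (Matrix.of fun r => V2 (e r)).mulVec y r *
        (Matrix.of fun r => W2 (e r)).mulVec z r) = ∑ r ∈ T, G2 r := by
    have h1 : ∀ r : Fin (t - s),
        (Matrix.of fun r => U2 (e r)).mulVec x r * (Matrix.of fun r => V2 (e r)).mulVec y r *
          (Matrix.of fun r => W2 (e r)).mulVec z r = G2 (e r) := by
      intro r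
      simp [Matrix.mulVec, hG2def]
    rw [Finset.sum_congr rfl fun r _ => h1 r]
    rw [← Finset.sum_coe_sort T G2]
    exact (Equiv.sum_comp e fun v : T => G2 v)
  have hasubT : Finset.image a Finset.univ ⊆ T := by
    intro r hr
    simp only [Finset.mem_image, Finset.mem_univ, true_and] at hr
    obtain ⟨k, rfl⟩ := hr
    simp only [hTdef, Finset.mem_sdiff, Finset.mem_univ, true_and, Finset.mem_image]
    rintro ⟨l, hl⟩
    exact hab k l hl.symm
  have hsplitT : ∑ r ∈ T \ Finset.image a Finset.univ, G2 r
      + ∑ r ∈ Finset.image a Finset.univ, G2 r = ∑ r ∈ T, G2 r :=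
    Finset.sum_sdiff hasubT
  have hsplitT' : ∑ r ∈ T \ Finset.image a Finset.univ, G r
      + ∑ r ∈ Finset.image a Finset.univ, G r = ∑ r ∈ T, G r :=
    Finset.sum_sdiff hasubT
  have hsplitU : ∑ r ∈ T, G r + ∑ r ∈ Finset.image b Finset.univ, G r
      = ∑ r ∈ Finset.univ, G r := Finset.sum_sdiff (Finset.subset_univ _)
  have hGa : ∑ r ∈ Finset.image a Finset.univ, G2 r
      = ∑ r ∈ Finset.image a Finset.univ, G r + ∑ r ∈ Finset.image b Finset.univ, G r := by
    rw [Finset.sum_image (fun k _ l _ h => ha h), Finset.sum_image (fun k _ l _ h => hb h),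
      Finset.sum_image (fun k _ l _ h => ha h), ← Finset.sum_add_distrib]
    exact Finset.sum_congr rfl fun k _ => hyes k
  have hGn : ∑ r ∈ T \ Finset.image a Finset.univ, G2 r
      = ∑ r ∈ T \ Finset.image a Finset.univ, G r := by
    refine Finset.sum_congr rfl fun r hr => hno r ?_
    simp only [Finset.mem_sdiff, Finset.mem_image, Finset.mem_univ, true_and] at hr
    rintro ⟨k, rfl⟩
    exact hr.2 ⟨k, rfl⟩
  have hLHS : (A * B * C).trace = ∑ r : Fin t, G r := halg A B C
  rw [hLHS, hRHS, ← hsplitT, hGn, hGa, ← add_assoc, hsplitT', hsplitU]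
end

section
/- Let F be a field and let K_U, K_V ∈ F^{2×2} be invertible matrices. Then there exists a ⟨2,2,2;7⟩-algorithm ⟨U,V,W⟩ over F such that the first row of U equals vec(K_U) and the first row of V equals vec(K_V). -/
open Matrix

set_option linter.unusedSectionVars false

namespace StrassenAux

variable {F : Type*} [Field F]

def Us : Matrix (Fin 7) (Fin (2*2)) F :=
  !![1,0,0,1; 0,0,1,1; 1,0,0,0; 0,0,0,1; 1,1,0,0; -1,0,1,0; 0,1,0,-1]
def Vs : Matrix (Fin 7) (Fin (2*2)) F :=
  !![1,0,0,1; 1,0,0,0; 0,1,0,-1; -1,0,1,0; 0,0,0,1; 1,1,0,0; 0,0,1,1]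
def Ws : Matrix (Fin 7) (Fin (2*2)) F :=
  !![1,0,0,1; 0,1,0,-1; 0,0,1,1; 1,1,0,0; -1,0,1,0; 0,0,0,1; 1,0,0,0]

lemma vec_eq (A : Matrix (Fin 2) (Fin 2) F) :
    _root_.vec A = ![A 0 0, A 0 1, A 1 0, A 1 1] := by
  funext r; fin_cases r <;> rfl

lemma strassen : IsMMAlg 2 2 2 7 (Us (F := F)) Vs Ws := by
  intro A B C
  rw [vec_eq, vec_eq, vec_eq]
  simp [Us, Vs, Ws, Matrix.trace, Matrix.mul_apply, Matrix.mulVec, dotProduct,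
    Fin.sum_univ_succ, Matrix.diag]
  ring

def LA (Q : Matrix (Fin 2) (Fin 2) F) : Matrix (Fin (2*2)) (Fin (2*2)) F :=
  !![Q 0 0, Q 1 0, 0, 0;
     Q 0 1, Q 1 1, 0, 0;
     0, 0, Q 0 0, Q 1 0;
     0, 0, Q 0 1, Q 1 1]

def LB (Q' R : Matrix (Fin 2) (Fin 2) F) : Matrix (Fin (2*2)) (Fin (2*2)) F :=
  !![Q' 0 0 * R 0 0, Q' 0 0 * R 1 0, Q' 0 1 * R 0 0, Q' 0 1 * R 1 0;
     Q' 0 0 * R 0 1, Q' 0 0 * R 1 1, Q' 0 1 * R 0 1, Q' 0 1 * R 1 1;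
     Q' 1 0 * R 0 0, Q' 1 0 * R 1 0, Q' 1 1 * R 0 0, Q' 1 1 * R 1 0;
     Q' 1 0 * R 0 1, Q' 1 0 * R 1 1, Q' 1 1 * R 0 1, Q' 1 1 * R 1 1]

def LC (S : Matrix (Fin 2) (Fin 2) F) : Matrix (Fin (2*2)) (Fin (2*2)) F :=
  !![S 0 0, 0, S 0 1, 0;
     0, S 0 0, 0, S 0 1;
     S 1 0, 0, S 1 1, 0;
     0, S 1 0, 0, S 1 1]

lemma LA_mulVec (Q A : Matrix (Fin 2) (Fin 2) F) :
    (LA Q).mulVec (_root_.vec A) = _root_.vec (A * Q) := by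
  rw [vec_eq, vec_eq]
  funext r; fin_cases r <;>
    simp [LA, Matrix.mulVec, dotProduct, Matrix.mul_apply, Fin.sum_univ_succ] <;> ring

lemma LB_mulVec (Q' R B : Matrix (Fin 2) (Fin 2) F) :
    (LB Q' R).mulVec (_root_.vec B) = _root_.vec (Q' * B * R) := by
  rw [vec_eq, vec_eq]
  funext r; fin_cases r <;>
    simp [LB, Matrix.mulVec, dotProduct, Matrix.mul_apply, Fin.sum_univ_succ] <;> ring

lemma LC_mulVec (S C : Matrix (Fin 2) (Fin 2) F) :
    (LC S).mulVec (_root_.vec C) = _root_.vec (S * C) := by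
  rw [vec_eq, vec_eq]
  funext r; fin_cases r <;>
    simp [LC, Matrix.mulVec, dotProduct, Matrix.mul_apply, Fin.sum_univ_succ] <;> ring

lemma rowU (Q : Matrix (Fin 2) (Fin 2) F) : (Us (F := F) * LA Q) 0 = _root_.vec Qᵀ := by
  rw [vec_eq]
  funext j; fin_cases j <;>
    simp [Us, LA, Matrix.mul_apply, Fin.sum_univ_succ] <;> ring

lemma rowV (Q' R : Matrix (Fin 2) (Fin 2) F) : (Vs (F := F) * LB Q' R) 0 = _root_.vec (R * Q')ᵀ := by
  rw [vec_eq]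
  funext j; fin_cases j <;>
    simp [Vs, LB, Matrix.mul_apply, Fin.sum_univ_succ] <;> ring

end StrassenAux

/-- For any invertible `K_U, K_V ∈ F^{2×2}` there is a `⟨2,2,2;7⟩`-algorithm whose first
encoding rows are `vec K_U` and `vec K_V`. -/
theorem exists_strassen_with_first_rows {F : Type*} [Field F]
    (K_U K_V : Matrix (Fin 2) (Fin 2) F) (hU : IsUnit K_U) (hV : IsUnit K_V) :
    ∃ (U : Matrix (Fin 7) (Fin (2 * 2)) F) (V : Matrix (Fin 7) (Fin (2 * 2)) F)
      (W : Matrix (Fin 7) (Fin (2 * 2)) F),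
      IsMMAlg 2 2 2 7 U V W ∧ U 0 = _root_.vec K_U ∧ V 0 = _root_.vec K_V := by
  open StrassenAux in
  have hUd : IsUnit K_U.det := (Matrix.isUnit_iff_isUnit_det _).mp hU
  have hVd : IsUnit K_V.det := (Matrix.isUnit_iff_isUnit_det _).mp hV
  set Q : Matrix (Fin 2) (Fin 2) F := K_Uᵀ with hQdef
  set Q' : Matrix (Fin 2) (Fin 2) F := (K_U⁻¹)ᵀ with hQ'def
  set R : Matrix (Fin 2) (Fin 2) F := K_Vᵀ * Q with hRdef
  set S : Matrix (Fin 2) (Fin 2) F := Q' * (K_V⁻¹)ᵀ with hSdef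
  have hQ : Q * Q' = 1 := by
    rw [hQdef, hQ'def, ← Matrix.transpose_mul, Matrix.nonsing_inv_mul _ hUd,
      Matrix.transpose_one]
  have hR : R * S = 1 := by
    rw [hRdef, hSdef, Matrix.mul_assoc, ← Matrix.mul_assoc Q Q', hQ, Matrix.one_mul,
      ← Matrix.transpose_mul, Matrix.nonsing_inv_mul _ hVd, Matrix.transpose_one]
  have hRQ' : R * Q' = K_Vᵀ := by
    rw [hRdef, Matrix.mul_assoc, hQ, Matrix.mul_one]
  refine ⟨Us (F := F) * LA Q, Vs (F := F) * LB Q' R, Ws (F := F) * LC S, ?_, ?_, ?_⟩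
  · intro A B C
    have key : A * Q * (Q' * B * R) * (S * C) = A * B * C := by
      simp only [Matrix.mul_assoc]
      rw [← Matrix.mul_assoc Q Q', hQ, Matrix.one_mul, ← Matrix.mul_assoc R S, hR,
        Matrix.one_mul]
    have hs := strassen (A * Q) (Q' * B * R) (S * C)
    rw [key] at hs
    rw [hs, ← LA_mulVec, ← LB_mulVec, ← LC_mulVec]
    simp only [Matrix.mulVec_mulVec]
  · rw [rowU, hQdef, Matrix.transpose_transpose]
  · rw [rowV, hRQ', Matrix.transpose_transpose]
end

section
/- Define g : ℕ → ℝ by g(m₀) = log(t₂(m₀)) / log(m₀²), where t₂(m₀) = (4·m₀⁶ + 90·m₀⁵ + 748·m₀⁴ + 2928·m₀³ + 5872·m₀² + 5856·m₀ + 2304)/36. Then for every even natural number m₀ ≥ 4 with m₀ ≠ 16, g(m₀) ≥ g(44) = log(1303676064)/log(1936), i.e. the exponent of the TA-New25b family of algorithms is minimized at base case n₀ = 44² = 1936. -/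
open Real

lemma key (t : ℝ) (m a b : ℕ) (hm : 2 ≤ m) (ht : 0 < t) (ha : 0 < a) (hb : 0 < b)
    (h1 : ((m : ℝ)) ^ (2 * a) ≤ t ^ b) (h2 : (1303676064 : ℝ) ^ b ≤ 1936 ^ a) :
    Real.log 1303676064 / Real.log 1936 ≤ Real.log t / Real.log ((m : ℝ) ^ 2) := by
  have hm1 : (1 : ℝ) < (m : ℝ) := by exact_mod_cast Nat.lt_of_lt_of_le one_lt_two hm
  have hlm : 0 < Real.log m := Real.log_pos hm1
  have hl1936 : 0 < Real.log 1936 := Real.log_pos (by norm_num)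
  have e1 : ((2 * a : ℕ) : ℝ) * Real.log m ≤ (b : ℝ) * Real.log t := by
    have h := Real.log_le_log (by positivity) h1
    rwa [Real.log_pow, Real.log_pow] at h
  have e2 : (b : ℝ) * Real.log 1303676064 ≤ (a : ℝ) * Real.log 1936 := by
    have h := Real.log_le_log (by positivity) h2
    rwa [Real.log_pow, Real.log_pow] at h
  push_cast at e1
  rw [Real.log_pow, div_le_div_iff₀ hl1936 (by positivity)]
  push_cast
  have hbpos : (0 : ℝ) < (b : ℝ) := by exact_mod_cast hb
  have f1 := mul_le_mul_of_nonneg_left e2 (by positivity : (0 : ℝ) ≤ 2 * Real.log m)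
  have f2 := mul_le_mul_of_nonneg_left e1 hl1936.le
  have e3 : (b : ℝ) * (Real.log 1303676064 * (2 * Real.log m)) ≤
      (b : ℝ) * (Real.log t * Real.log 1936) := by nlinarith [f1, f2]
  linarith [le_of_mul_le_mul_left e3 hbpos]

/-- The exponent of the `TA-New25b` family is minimized at base case `n₀ = 44² = 1936`, where
it equals `log 1303676064 / log 1936`. -/
theorem ta_new25b_optimal_exponent (g : ℕ → ℝ)
    (hg : ∀ m₀ : ℕ, g m₀ =
      Real.log ((4 * (m₀ : ℝ) ^ 6 + 90 * (m₀ : ℝ) ^ 5 + 748 * (m₀ : ℝ) ^ 4 +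
          2928 * (m₀ : ℝ) ^ 3 + 5872 * (m₀ : ℝ) ^ 2 + 5856 * (m₀ : ℝ) + 2304) / 36) /
        Real.log ((m₀ : ℝ) ^ 2)) :
    (∀ m₀ : ℕ, 4 ≤ m₀ → Even m₀ → m₀ ≠ 16 → g m₀ ≥ g 44) ∧
      g 44 = Real.log 1303676064 / Real.log 1936 := by
  have h44 : g 44 = Real.log 1303676064 / Real.log 1936 := by
    rw [hg]; norm_num
  refine ⟨?_, h44⟩
  intro m hm hev h16
  rcases hev with ⟨k, rfl⟩
  rw [h44, hg, ge_iff_le]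
  have hk2 : 2 ≤ k := by omega
  by_cases hk : k ≤ 70
  · interval_cases k
    · apply key _ _ 14 5 <;> norm_num
    · apply key _ _ 14 5 <;> norm_num
    · apply key _ _ 14 5 <;> norm_num
    · apply key _ _ 14 5 <;> norm_num
    · apply key _ _ 14 5 <;> norm_num
    · apply key _ _ 14 5 <;> norm_num
    · omega
    · apply key _ _ 14 5 <;> norm_num
    · apply key _ _ 25 9 <;> norm_num
    · apply key _ _ 25 9 <;> norm_num
    · apply key _ _ 25 9 <;> norm_num
    · apply key _ _ 25 9 <;> norm_num
    · apply key _ _ 25 9 <;> norm_num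
    · apply key _ _ 25 9 <;> norm_num
    · apply key _ _ 86 31 <;> norm_num
    · apply key _ _ 86 31 <;> norm_num
    · apply key _ _ 86 31 <;> norm_num
    · apply key _ _ 147 53 <;> norm_num <;> norm_cast <;> decide +kernel
    · apply key _ _ 208 75 <;> norm_num <;> norm_cast <;> decide +kernel
    · set_option maxRecDepth 100000 in apply key _ _ 269 97 <;> norm_num <;> norm_cast <;> decide +kernel
    · norm_num
    · set_option maxRecDepth 100000 in apply key _ _ 269 97 <;> norm_num <;> norm_cast <;> decide +kernel
    · apply key _ _ 208 75 <;> norm_num <;> norm_cast <;> decide +kernel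
    · apply key _ _ 147 53 <;> norm_num <;> norm_cast <;> decide +kernel
    · apply key _ _ 147 53 <;> norm_num <;> norm_cast <;> decide +kernel
    · apply key _ _ 86 31 <;> norm_num
    · apply key _ _ 86 31 <;> norm_num
    · apply key _ _ 86 31 <;> norm_num
    · apply key _ _ 86 31 <;> norm_num
    · apply key _ _ 86 31 <;> norm_num
    · apply key _ _ 86 31 <;> norm_num
    · apply key _ _ 86 31 <;> norm_num
    · apply key _ _ 86 31 <;> norm_num
    · apply key _ _ 86 31 <;> norm_num
    · apply key _ _ 25 9 <;> norm_num
    · apply key _ _ 25 9 <;> norm_num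
    · apply key _ _ 25 9 <;> norm_num
    · apply key _ _ 25 9 <;> norm_num
    · apply key _ _ 25 9 <;> norm_num
    · apply key _ _ 25 9 <;> norm_num
    · apply key _ _ 25 9 <;> norm_num
    · apply key _ _ 25 9 <;> norm_num
    · apply key _ _ 25 9 <;> norm_num
    · apply key _ _ 25 9 <;> norm_num
    · apply key _ _ 25 9 <;> norm_num
    · apply key _ _ 25 9 <;> norm_num
    · apply key _ _ 25 9 <;> norm_num
    · apply key _ _ 25 9 <;> norm_num
    · apply key _ _ 25 9 <;> norm_num
    · apply key _ _ 25 9 <;> norm_num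
    · apply key _ _ 25 9 <;> norm_num
    · apply key _ _ 25 9 <;> norm_num
    · apply key _ _ 25 9 <;> norm_num
    · apply key _ _ 25 9 <;> norm_num
    · apply key _ _ 25 9 <;> norm_num
    · apply key _ _ 25 9 <;> norm_num
    · apply key _ _ 25 9 <;> norm_num
    · apply key _ _ 25 9 <;> norm_num
    · apply key _ _ 25 9 <;> norm_num
    · apply key _ _ 25 9 <;> norm_num
    · apply key _ _ 25 9 <;> norm_num
    · apply key _ _ 25 9 <;> norm_num
    · apply key _ _ 25 9 <;> norm_num
    · apply key _ _ 25 9 <;> norm_num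
    · apply key _ _ 25 9 <;> norm_num
    · apply key _ _ 25 9 <;> norm_num
    · apply key _ _ 25 9 <;> norm_num
    · apply key _ _ 25 9 <;> norm_num
    · apply key _ _ 25 9 <;> norm_num
  · push_neg at hk
    set x : ℝ := ((k + k : ℕ) : ℝ) with hxdef
    have hx142 : (142 : ℝ) ≤ x := by
      rw [hxdef]; exact_mod_cast (by omega : 142 ≤ k + k)
    have h0 : (0 : ℝ) ≤ x := by positivity
    apply key _ _ 25 9
    · omega
    · positivity
    · norm_num
    · norm_num
    · have h6 : x ^ 6 / 9 ≤ (4 * x ^ 6 + 90 * x ^ 5 + 748 * x ^ 4 +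
          2928 * x ^ 3 + 5872 * x ^ 2 + 5856 * x + 2304) / 36 := by
        have p5 := pow_nonneg h0 5
        have p4 := pow_nonneg h0 4
        have p3 := pow_nonneg h0 3
        have p2 := pow_nonneg h0 2
        linarith
      have h9 : (x ^ 6 / 9) ^ 9 ≤ ((4 * x ^ 6 + 90 * x ^ 5 + 748 * x ^ 4 +
          2928 * x ^ 3 + 5872 * x ^ 2 + 5856 * x + 2304) / 36) ^ 9 :=
        pow_le_pow_left₀ (by positivity) h6 9
      have hx4 : (9 : ℝ) ^ 9 ≤ x ^ 4 := by
        have := pow_le_pow_left₀ (by norm_num : (0 : ℝ) ≤ 142) hx142 4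
        calc (9 : ℝ) ^ 9 ≤ 142 ^ 4 := by norm_num
          _ ≤ x ^ 4 := this
      have hmain : x ^ (2 * 25) ≤ (x ^ 6 / 9) ^ 9 := by
        rw [div_pow, le_div_iff₀ (by positivity)]
        calc x ^ (2 * 25) * 9 ^ 9 ≤ x ^ 50 * x ^ 4 := by
              rw [(by norm_num : 2 * 25 = 50)]
              exact mul_le_mul_of_nonneg_left hx4 (pow_nonneg h0 50)
          _ = (x ^ 6) ^ 9 := by ring
      exact hmain.trans h9
    · norm_num
end

section
/- Let F be a field. The explicit 7×4 matrices U^Str with rows (1,0,0,1), (0,0,0,1), (0,1,0,1), (1,−1,0,0), (1,0,1,0), (1,0,0,0), (0,0,1,−1); V^Str with rows (1,0,0,1), (1,0,1,0), (0,0,−1,1), (0,0,0,1), (1,−1,0,0), (0,−1,0,−1), (1,0,0,0); and W^Str with rows (1,0,0,1), (−1,1,0,0), (−1,0,0,0), (−1,0,−1,0), (0,0,0,−1), (0,0,−1,1), (0,1,0,1), form a ⟨2,2,2;7⟩-algorithm over F. Moreover, the 2×2 matrices M([U^Str]₀) and M([V^Str]₀) are invertible. -/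
open Matrix

/-- `mat v` is the matrix whose row-major vectorization is `v` (the inverse of `vec`). -/
def mat {F : Type*} {m n : ℕ} (v : Fin (m * n) → F) : Matrix (Fin m) (Fin n) F :=
  fun i j => v (finProdFinEquiv (i, j))

/-- Strassen's `⟨2,2,2;7⟩`-algorithm; moreover its first encoding rows represent invertible
`2×2` matrices. -/
theorem strassen_is_mm_algorithm {F : Type*} [Field F] :
    let UStr : Matrix (Fin 7) (Fin (2 * 2)) F :=
      !![1, 0, 0, 1; 0, 0, 0, 1; 0, 1, 0, 1; 1, -1, 0, 0; 1, 0, 1, 0; 1, 0, 0, 0; 0, 0, 1, -1]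
    let VStr : Matrix (Fin 7) (Fin (2 * 2)) F :=
      !![1, 0, 0, 1; 1, 0, 1, 0; 0, 0, -1, 1; 0, 0, 0, 1; 1, -1, 0, 0; 0, -1, 0, -1; 1, 0, 0, 0]
    let WStr : Matrix (Fin 7) (Fin (2 * 2)) F :=
      !![1, 0, 0, 1; -1, 1, 0, 0; -1, 0, 0, 0; -1, 0, -1, 0; 0, 0, 0, -1; 0, 0, -1, 1; 0, 1, 0, 1]
    IsMMAlg 2 2 2 7 UStr VStr WStr ∧ IsUnit (mat (UStr 0)) ∧ IsUnit (mat (VStr 0)) := by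
  intro UStr VStr WStr
  refine ⟨?_, ?_, ?_⟩
  · intro A B C
    simp only [UStr, VStr, WStr, Matrix.trace, Matrix.diag, Matrix.mul_apply, Matrix.mulVec,
      dotProduct, _root_.vec, Fin.sum_univ_succ, Fin.sum_univ_zero, Fin.isValue]
    norm_num [Fin.divNat, Fin.modNat, Matrix.cons_val, Matrix.cons_val', Matrix.cons_val_zero, Matrix.cons_val_one,
      Matrix.head_cons, Matrix.head_fin_const, Matrix.vecHead, Matrix.vecTail]
    simp
    ring
  · have : mat (UStr 0) = (1 : Matrix (Fin 2) (Fin 2) F) := by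
      ext i j
      fin_cases i <;> fin_cases j <;>
        simp [mat, UStr, finProdFinEquiv, Matrix.one_apply]
    rw [this]; exact isUnit_one
  · have : mat (VStr 0) = (1 : Matrix (Fin 2) (Fin 2) F) := by
      ext i j
      fin_cases i <;> fin_cases j <;>
        simp [mat, VStr, finProdFinEquiv, Matrix.one_apply]
    rw [this]; exact isUnit_one
end

section
/- Let F be a field, n a positive natural number, let ⟨U,V,W⟩ be an ⟨n,n,n;t⟩-algorithm over F, and let K ∈ F^{n×n} be invertible. Define U' = U·(Iₙ ⊗ Kᵀ), V' = V·(K⁻¹ ⊗ Iₙ), and W' = W. Then ⟨U',V',W'⟩ is an ⟨n,n,n;t⟩-algorithm over F. -/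
open Matrix

/-- The Kronecker product on `Fin`-indexed matrices:
`(K ⊗ L) (p*i+k) (q*j+l) = K i j * L k l`. -/
def kron {F : Type*} [Mul F] {m n p q : ℕ}
    (K : Matrix (Fin m) (Fin n) F) (L : Matrix (Fin p) (Fin q) F) :
    Matrix (Fin (m * p)) (Fin (n * q)) F :=
  fun r c => K r.divNat c.divNat * L r.modNat c.modNat

lemma kron_mulVec_vec {F : Type*} [Field F] {m n p q : ℕ}
    (M : Matrix (Fin m) (Fin n) F) (N : Matrix (Fin p) (Fin q) F)
    (A : Matrix (Fin n) (Fin q) F) :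
    (kron M N).mulVec (vec A) = _root_.vec (M * A * Nᵀ) := by
  ext r
  have hdiv : ∀ x : Fin n × Fin q, (finProdFinEquiv x).divNat = x.1 := fun x =>
    congrArg Prod.fst (finProdFinEquiv.symm_apply_apply x)
  have hmod : ∀ x : Fin n × Fin q, (finProdFinEquiv x).modNat = x.2 := fun x =>
    congrArg Prod.snd (finProdFinEquiv.symm_apply_apply x)
  simp only [mulVec, dotProduct, kron, _root_.vec, mul_apply, transpose_apply]
  rw [← finProdFinEquiv.sum_comp]
  rw [Fintype.sum_prod_type]
  simp only [hdiv, hmod, Finset.mul_sum, Finset.sum_mul]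
  rw [Finset.sum_comm]
  congr 1; ext j; congr 1; ext l; ring

/-- The de Groote operator: if `⟨U,V,W⟩` is an `⟨n,n,n;t⟩`-algorithm and `K` is invertible,
then `⟨U * (Iₙ ⊗ Kᵀ), V * (K⁻¹ ⊗ Iₙ), W⟩` is an `⟨n,n,n;t⟩`-algorithm. -/
theorem deGroote_isMMAlg {F : Type*} [Field F] (n t : ℕ) (hn : 0 < n)
    (U V W : Matrix (Fin t) (Fin (n * n)) F)
    (halg : IsMMAlg n n n t U V W)
    (K : Matrix (Fin n) (Fin n) F) (hK : IsUnit K) :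
    IsMMAlg n n n t (U * kron (1 : Matrix (Fin n) (Fin n) F) Kᵀ)
      (V * kron K⁻¹ (1 : Matrix (Fin n) (Fin n) F)) W := by
  intro A B C
  have hKdet : IsUnit K.det := (isUnit_iff_isUnit_det K).mp hK
  have h1 : (U * kron (1 : Matrix (Fin n) (Fin n) F) Kᵀ).mulVec (vec A)
      = U.mulVec (vec (A * K)) := by
    rw [← mulVec_mulVec, kron_mulVec_vec]
    simp [Matrix.one_mul, Matrix.transpose_transpose]
  have h2 : (V * kron K⁻¹ (1 : Matrix (Fin n) (Fin n) F)).mulVec (vec B)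
      = V.mulVec (vec (K⁻¹ * B)) := by
    rw [← mulVec_mulVec, kron_mulVec_vec]
    simp [Matrix.mul_one]
  rw [h1, h2, ← halg]
  congr 2
  rw [← Matrix.mul_assoc, Matrix.mul_assoc A, Matrix.mul_nonsing_inv _ hKdet, Matrix.mul_one]
end
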